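/- arXiv:1704.02959 — 2 statements merged into one kernel-verified Lean document; each statement's English description precedes it below -/
import Mathlib

section
/- The packing density of the permutation 12 restricted to 123-avoiding permutations equals 1/2. -/
open Filter Real

/-- Number of occurrences of the pattern `S` in the permutation `P`:
an occurrence is a strictly increasing choice of positions whose entries
appear in the same relative order as `S`. -/
def numOcc {m n : ℕ} (S : Equiv.Perm (Fin m)) (P : Equiv.Perm (Fin n)) : ℕ :=
  (Finset.univ.filter
    (fun f : Fin m → Fin n =>
      (∀ i j : Fin m, i < j → f i < f j) ∧
      (∀ i j : Fin m, S i < S j ↔ P (f i) < P (f j)))).card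

/-- The pattern density `p(S,P)`: the number of occurrences of `S` in `P`
divided by `C(n,m)` (this is `0` when `n < m`, since then `C(n,m) = 0`
and there are no occurrences). -/
noncomputable def patternDensity {m n : ℕ} (S : Equiv.Perm (Fin m)) (P : Equiv.Perm (Fin n)) : ℝ :=
  (numOcc S P : ℝ) / (n.choose m : ℝ)

/-- `p(S,n)`: the maximum of `p(S,P)` over all permutations `P` of length `n`. -/
noncomputable def maxDensity {m : ℕ} (S : Equiv.Perm (Fin m)) (n : ℕ) : ℝ :=
  ⨆ P : Equiv.Perm (Fin n), patternDensity S P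

/-- `P` avoids the pattern `T` if `P` has no occurrence of `T`. -/
def avoids {k n : ℕ} (T : Equiv.Perm (Fin k)) (P : Equiv.Perm (Fin n)) : Prop :=
  numOcc T P = 0

/-- `p(S,n;T)`: the maximum of `p(S,P)` over all `T`-avoiding permutations `P` of length `n`. -/
noncomputable def maxDensityAvoiding {m k : ℕ} (S : Equiv.Perm (Fin m)) (T : Equiv.Perm (Fin k))
    (n : ℕ) : ℝ :=
  sSup {x : ℝ | ∃ P : Equiv.Perm (Fin n), avoids T P ∧ x = patternDensity S P}

/-- The permutation 12 (0-indexed one-line notation). -/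
def perm12 : Equiv.Perm (Fin 2) :=
  ⟨![0,1], ![0,1], by intro x; fin_cases x <;> rfl, by intro x; fin_cases x <;> rfl⟩

/-- The permutation 123 (0-indexed one-line notation). -/
def perm123 : Equiv.Perm (Fin 3) :=
  ⟨![0,1,2], ![0,1,2], by intro x; fin_cases x <;> rfl, by intro x; fin_cases x <;> rfl⟩

@[simp] lemma perm12_apply (i : Fin 2) : perm12 i = i := by fin_cases i <;> rfl
@[simp] lemma perm123_apply (i : Fin 3) : perm123 i = i := by fin_cases i <;> rfl

lemma mem12 {n : ℕ} (P : Equiv.Perm (Fin n)) (f : Fin 2 → Fin n) :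
    ((∀ i j : Fin 2, i < j → f i < f j) ∧
      (∀ i j : Fin 2, perm12 i < perm12 j ↔ P (f i) < P (f j)))
      ↔ (f 0 < f 1 ∧ P (f 0) < P (f 1)) := by
  simp only [Fin.forall_fin_two, perm12_apply, Fin.lt_def, Fin.val_zero, Fin.val_one]
  norm_num
  omega

/-- pair formulation of numOcc of 12 -/
lemma numOcc12_eq {n : ℕ} (P : Equiv.Perm (Fin n)) :
    numOcc perm12 P =
      (Finset.univ.filter (fun p : Fin n × Fin n => p.1 < p.2 ∧ P p.1 < P p.2)).card := by
  unfold numOcc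
  apply Finset.card_bij' (fun f _ => (f 0, f 1)) (fun p _ => ![p.1, p.2])
  · intro f hf
    simp only [Finset.mem_filter, Finset.mem_univ, true_and, mem12] at hf ⊢
    exact hf
  · intro p hp
    simp only [Finset.mem_filter, Finset.mem_univ, true_and, mem12] at hp ⊢
    simpa using hp
  · intro f hf
    funext i
    fin_cases i <;> simp
  · intro p hp
    simp

lemma not_avoids123 {n : ℕ} (P : Equiv.Perm (Fin n)) {a b c : Fin n}
    (hab : a < b) (hbc : b < c) (h1 : P a < P b) (h2 : P b < P c) :
    ¬ avoids perm123 P := by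
  intro h
  rw [avoids, numOcc, Finset.card_eq_zero] at h
  have : (![a,b,c] : Fin 3 → Fin n) ∈ (∅ : Finset (Fin 3 → Fin n)) := by
    rw [← h]
    simp only [Finset.mem_filter, Finset.mem_univ, true_and]
    simp only [Fin.lt_def] at hab hbc
    have h1' := Fin.lt_def.mp h1
    have h2' := Fin.lt_def.mp h2
    constructor
    · intro i j hij
      rw [Fin.lt_def] at hij ⊢
      fin_cases i <;> fin_cases j <;> simp_all <;> omega
    · intro i j
      simp only [perm123_apply, Fin.lt_def]
      fin_cases i <;> fin_cases j <;> simp_all <;> omega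
  simp at this


lemma upper_bound {n : ℕ} (P : Equiv.Perm (Fin n)) (hP : avoids perm123 P) :
    (numOcc perm12 P : ℝ) ≤ (n : ℝ)^2 / 4 := by
  classical
  set B : Finset (Fin n) := Finset.univ.filter (fun b => ∃ k, k < b ∧ P k < P b) with hB
  set A : Finset (Fin n) := Finset.univ.filter (fun b => ¬ ∃ k, k < b ∧ P k < P b) with hA
  have hsub : (Finset.univ.filter (fun p : Fin n × Fin n => p.1 < p.2 ∧ P p.1 < P p.2))
      ⊆ A ×ˢ B := by
    intro p hp
    simp only [Finset.mem_filter, Finset.mem_univ, true_and] at hp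
    obtain ⟨hlt, hPlt⟩ := hp
    rw [Finset.mem_product, hA, hB]
    simp only [Finset.mem_filter, Finset.mem_univ, true_and]
    constructor
    · rintro ⟨k, hk1, hk2⟩
      exact not_avoids123 P hk1 hlt hk2 hPlt hP
    · exact ⟨p.1, hlt, hPlt⟩
  have hcard : numOcc perm12 P ≤ A.card * B.card := by
    rw [numOcc12_eq]
    calc _ ≤ (A ×ˢ B).card := Finset.card_le_card hsub
    _ = A.card * B.card := Finset.card_product A B
  have hAB : A.card + B.card = n := by
    have := Finset.card_filter_add_card_filter_not
      (s := (Finset.univ : Finset (Fin n))) (p := fun b => ∃ k, k < b ∧ P k < P b)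
    simp only [Finset.card_univ, Fintype.card_fin] at this
    rw [hA, hB]; omega
  have h1 : (numOcc perm12 P : ℝ) ≤ (A.card : ℝ) * B.card := by exact_mod_cast hcard
  have h2 : (A.card : ℝ) + B.card = n := by exact_mod_cast hAB
  nlinarith [sq_nonneg ((A.card : ℝ) - B.card)]

def halfFlip (n : ℕ) (i : Fin n) : Fin n :=
  if h : (i : ℕ) < n / 2 then ⟨n / 2 - 1 - i, by omega⟩
  else ⟨n - 1 - (i : ℕ) + n / 2, by have := i.isLt; omega⟩

lemma halfFlip_inv (n : ℕ) : Function.Involutive (halfFlip n) := by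
  intro i
  have hi := i.isLt
  unfold halfFlip
  split
  · next h =>
    have : n / 2 - 1 - (i : ℕ) < n / 2 := by omega
    rw [dif_pos this]
    exact Fin.ext (by simp; omega)
  · next h =>
    have : ¬ (n - 1 - (i : ℕ) + n / 2 < n / 2) := by omega
    rw [dif_neg this]
    exact Fin.ext (by simp; omega)

noncomputable def Pmax (n : ℕ) : Equiv.Perm (Fin n) := (halfFlip_inv n).toPerm

lemma Pmax_apply (n : ℕ) (i : Fin n) : Pmax n i = halfFlip n i := rfl

lemma avoids_Pmax (n : ℕ) : avoids perm123 (Pmax n) := by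
  rw [avoids, numOcc, Finset.card_eq_zero, Finset.filter_eq_empty_iff]
  rintro f -
  rintro ⟨hmono, hiff⟩
  have h01 : f 0 < f 1 := hmono 0 1 (by decide)
  have h12 : f 1 < f 2 := hmono 1 2 (by decide)
  have p01 : Pmax n (f 0) < Pmax n (f 1) := (hiff 0 1).mp (by decide)
  have p12 : Pmax n (f 1) < Pmax n (f 2) := (hiff 1 2).mp (by decide)
  rw [Fin.lt_def] at h01 h12
  simp only [Fin.lt_def, Pmax_apply, halfFlip] at p01 p12
  have i0 := (f 0).isLt; have i1 := (f 1).isLt; have i2 := (f 2).isLt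
  split_ifs at p01 p12 <;> simp only [] at p01 p12 <;> omega

lemma numOcc_Pmax (n : ℕ) : numOcc perm12 (Pmax n) = (n / 2) * (n - n / 2) := by
  rw [numOcc12_eq]
  have : (Finset.univ.filter (fun p : Fin n × Fin n => p.1 < p.2 ∧ Pmax n p.1 < Pmax n p.2))
      = (Finset.univ.filter (fun a : Fin n => (a : ℕ) < n / 2)) ×ˢ
        (Finset.univ.filter (fun b : Fin n => n / 2 ≤ (b : ℕ))) := by
    ext p
    simp only [Finset.mem_filter, Finset.mem_univ, true_and, Finset.mem_product,
      Fin.lt_def, Pmax_apply]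
    unfold halfFlip
    have i1 := p.1.isLt; have i2 := p.2.isLt
    split <;> split <;> simp_all <;> omega
  rw [this, Finset.card_product]
  congr 1
  · rcases Nat.eq_zero_or_pos n with h | h
    · subst h; simp
    · have hk : n / 2 < n := by omega
      have : (Finset.univ.filter (fun a : Fin n => (a : ℕ) < n / 2)) = Finset.Iio ⟨n/2, hk⟩ := by
        ext a; simp [Fin.lt_def]
      rw [this, Fin.card_Iio]
  · rcases Nat.eq_zero_or_pos n with h | h
    · subst h; simp
    · have hk : n / 2 < n := by omega
      have : (Finset.univ.filter (fun b : Fin n => n / 2 ≤ (b : ℕ))) = Finset.Ici ⟨n/2, hk⟩ := by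
        ext a; simp [Fin.le_def]
      rw [this, Fin.card_Ici]

lemma choose_two_cast (n : ℕ) : ((n.choose 2 : ℕ) : ℝ) = n * (n - 1) / 2 := by
  have h2 : 2 * n.choose 2 = n * (n - 1) := by
    rw [Nat.choose_two_right]
    have hev : Even (n * (n - 1)) := by
      rcases Nat.even_or_odd n with h | h
      · exact h.mul_right _
      · exact (Nat.Odd.sub_odd h odd_one).mul_left _
    obtain ⟨c, hc⟩ := hev
    omega
  have := congrArg (fun x : ℕ => (x : ℝ)) h2
  push_cast at this
  rcases Nat.eq_zero_or_pos n with h | h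
  · subst h; simp
  · rw [Nat.cast_sub h, Nat.cast_one] at this
    linarith

lemma bounds (n : ℕ) (hn : 2 ≤ n) :
    1/2 ≤ maxDensityAvoiding perm12 perm123 n ∧
    maxDensityAvoiding perm12 perm123 n ≤ 1/2 + 1/(2*((n:ℝ)-1)) := by
  have hC : ((n.choose 2 : ℕ) : ℝ) = n * (n-1) / 2 := choose_two_cast n
  have hn1 : (2:ℝ) ≤ (n:ℝ) := by exact_mod_cast hn
  have hCpos : (0:ℝ) < ((n.choose 2 : ℕ) : ℝ) := by rw [hC]; nlinarith
  set S := {x : ℝ | ∃ P : Equiv.Perm (Fin n), avoids perm123 P ∧ x = patternDensity perm12 P}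
    with hS
  have hub : ∀ x ∈ S, x ≤ 1/2 + 1/(2*((n:ℝ)-1)) := by
    rintro x ⟨P, hav, rfl⟩
    have h1 : (numOcc perm12 P : ℝ) ≤ (n:ℝ)^2/4 := upper_bound P hav
    rw [patternDensity, div_le_iff₀ hCpos, hC]
    have h2 : (0:ℝ) < (n:ℝ) - 1 := by linarith
    have heq : (1/2 + 1/(2*((n:ℝ)-1))) * ((n:ℝ)*((n:ℝ)-1)/2) = (n:ℝ)^2/4 := by
      field_simp; ring
    linarith
  constructor
  · have hmem : patternDensity perm12 (Pmax n) ∈ S := ⟨Pmax n, avoids_Pmax n, rfl⟩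
    have hbdd : BddAbove S := ⟨1/2 + 1/(2*((n:ℝ)-1)), hub⟩
    refine le_trans ?_ (le_csSup hbdd hmem)
    rw [patternDensity, numOcc_Pmax, le_div_iff₀ hCpos, hC]
    have hk1 : 2 * (n/2) ≤ n := by omega
    have hk2 : n ≤ 2 * (n/2) + 1 := by omega
    have hkn : (n/2 : ℕ) ≤ n := Nat.div_le_self n 2
    have hc1 : (2:ℝ) * ((n/2 : ℕ) : ℝ) ≤ (n:ℝ) := by exact_mod_cast hk1
    have hc2 : (n:ℝ) ≤ 2 * ((n/2 : ℕ) : ℝ) + 1 := by exact_mod_cast hk2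
    push_cast [Nat.cast_sub hkn]
    nlinarith [mul_nonneg (by linarith : (0:ℝ) ≤ 2*((n/2:ℕ):ℝ) - ((n:ℝ)-1))
      (by linarith : (0:ℝ) ≤ (n:ℝ) - 2*((n/2:ℕ):ℝ))]
  · refine Real.sSup_le hub ?_
    have h2 : (0:ℝ) < (n:ℝ) - 1 := by linarith
    positivity

/-- The packing density of 12 restricted to 123-avoiding permutations equals 1/2. -/
theorem stmt_8 :
    Tendsto (fun n => maxDensityAvoiding perm12 perm123 n) atTop (nhds (1 / 2)) := by
  have h1 : Filter.Tendsto (fun n : ℕ => ((n:ℝ) - 1)) Filter.atTop Filter.atTop :=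
    Filter.tendsto_atTop_add_const_right _ (-1) tendsto_natCast_atTop_atTop
  have h2 : Filter.Tendsto (fun n : ℕ => 2*((n:ℝ) - 1)) Filter.atTop Filter.atTop :=
    h1.const_mul_atTop (by norm_num)
  have h4 : Filter.Tendsto (fun n : ℕ => 1/2 + 1/(2*((n:ℝ) - 1))) Filter.atTop (nhds (1/2)) := by
    have h5 := (tendsto_const_nhds (x := (1/2 : ℝ))
      (f := (Filter.atTop : Filter ℕ))).add h2.inv_tendsto_atTop
    simp only [add_zero] at h5
    exact h5.congr (fun n => by simp [Pi.inv_apply, one_div])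
  refine tendsto_of_tendsto_of_tendsto_of_le_of_le' tendsto_const_nhds h4 ?_ ?_
  · filter_upwards [Filter.eventually_ge_atTop 2] with n hn using (bounds n hn).1
  · filter_upwards [Filter.eventually_ge_atTop 2] with n hn using (bounds n hn).2
end

section
/- The packing density of the permutation 231654 is at least 6! · (1/2)⁶ / (3!)² · (2√3 − 3), i.e. p(231654) ≥ (5/16)·(2√3 − 3). -/
open Filter Real

/-- The permutation 231654 (0-indexed one-line notation). -/
def perm231654 : Equiv.Perm (Fin 6) :=
  ⟨![1,2,0,5,4,3], ![2,0,1,5,4,3], by intro x; fin_cases x <;> rfl, by intro x; fin_cases x <;> rfl⟩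


namespace Pack

variable {m n : ℕ}

def occSet (S : Equiv.Perm (Fin m)) (P : Equiv.Perm (Fin n)) : Finset (Fin m → Fin n) :=
  Finset.univ.filter
    (fun f : Fin m → Fin n =>
      (∀ i j : Fin m, i < j → f i < f j) ∧
      (∀ i j : Fin m, S i < S j ↔ P (f i) < P (f j)))

lemma numOcc_eq (S : Equiv.Perm (Fin m)) (P : Equiv.Perm (Fin n)) :
    numOcc S P = (occSet S P).card := rfl

lemma mem_occSet {S : Equiv.Perm (Fin m)} {P : Equiv.Perm (Fin n)} {f : Fin m → Fin n} :
    f ∈ occSet S P ↔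
      (∀ i j : Fin m, i < j → f i < f j) ∧
      (∀ i j : Fin m, S i < S j ↔ P (f i) < P (f j)) := by
  simp [occSet]

/-- delete position `i` from the permutation `P` -/
def del (P : Equiv.Perm (Fin (n+1))) (i : Fin (n+1)) : Equiv.Perm (Fin n) :=
  (finSuccAboveEquiv i).trans
    ((P.subtypeEquiv (fun x => not_congr (EmbeddingLike.apply_eq_iff_eq P).symm)).trans
      (finSuccAboveEquiv (P i)).symm)

lemma succAbove_finSuccAboveEquiv_symm (p : Fin (n+1)) (x : {x : Fin (n+1) // x ≠ p}) :
    p.succAbove ((finSuccAboveEquiv p).symm x) = x := by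
  have h := finSuccAboveEquiv_apply p ((finSuccAboveEquiv p).symm x)
  rw [Equiv.apply_symm_apply] at h
  exact (congrArg Subtype.val h).symm

lemma del_spec (P : Equiv.Perm (Fin (n+1))) (i : Fin (n+1)) (j : Fin n) :
    (P i).succAbove (del P i j) = P (i.succAbove j) := by
  unfold del
  simp only [Equiv.trans_apply, finSuccAboveEquiv_apply, Equiv.subtypeEquiv_apply]
  exact succAbove_finSuccAboveEquiv_symm _ _

lemma del_lt_iff (P : Equiv.Perm (Fin (n+1))) (i : Fin (n+1)) (j j' : Fin n) :
    del P i j < del P i j' ↔ P (i.succAbove j) < P (i.succAbove j') := by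
  rw [← del_spec, ← del_spec, Fin.succAbove_lt_succAbove_iff]

lemma card_occ_del (S : Equiv.Perm (Fin m)) (P : Equiv.Perm (Fin (n+1))) (i : Fin (n+1)) :
    numOcc S (del P i) = ((occSet S P).filter (fun f => ∀ a, f a ≠ i)).card := by
  rw [numOcc_eq]
  apply Finset.card_bij (fun f _ => i.succAbove ∘ f)
  · intro f hf
    rw [mem_occSet] at hf
    rw [Finset.mem_filter, mem_occSet]
    refine ⟨⟨fun a b hab => Fin.strictMono_succAbove i (hf.1 a b hab), fun a b => ?_⟩,
      fun a => Fin.succAbove_ne i (f a)⟩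
    rw [hf.2 a b, del_lt_iff]
    exact Iff.rfl
  · intro f hf g hg h
    funext x
    exact (Fin.strictMono_succAbove i).injective (congrFun h x)
  · intro g hg
    rw [Finset.mem_filter, mem_occSet] at hg
    refine ⟨fun a => (finSuccAboveEquiv i).symm ⟨g a, hg.2 a⟩, ?_, ?_⟩
    · have hcomp : ∀ a, i.succAbove ((finSuccAboveEquiv i).symm ⟨g a, hg.2 a⟩) = g a :=
        fun a => succAbove_finSuccAboveEquiv_symm i _
      rw [mem_occSet]
      constructor
      · intro a b hab
        rw [← Fin.succAbove_lt_succAbove_iff (p := i), hcomp, hcomp]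
        exact hg.1.1 a b hab
      · intro a b
        rw [del_lt_iff, hcomp, hcomp]
        exact hg.1.2 a b
    · funext a
      exact succAbove_finSuccAboveEquiv_symm i _

lemma sum_del (S : Equiv.Perm (Fin m)) (P : Equiv.Perm (Fin (n+1))) :
    ∑ i : Fin (n+1), numOcc S (del P i) = (n+1-m) * numOcc S P := by
  calc ∑ i : Fin (n+1), numOcc S (del P i)
      = ∑ i : Fin (n+1), ((occSet S P).filter (fun f => ∀ a, f a ≠ i)).card := by
        simp [card_occ_del]
    _ = ∑ i : Fin (n+1), ∑ f ∈ occSet S P, if (∀ a, f a ≠ i) then 1 else 0 := by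
        simp only [Finset.card_filter]
    _ = ∑ f ∈ occSet S P, ∑ i : Fin (n+1), if (∀ a, f a ≠ i) then 1 else 0 :=
        Finset.sum_comm
    _ = ∑ _f ∈ occSet S P, (n+1-m) := by
        apply Finset.sum_congr rfl
        intro f hf
        rw [← Finset.card_filter]
        rw [mem_occSet] at hf
        have hinj : Function.Injective f := by
          have : StrictMono f := fun a b hab => hf.1 a b hab
          exact this.injective
        have hset : (Finset.univ.filter (fun i : Fin (n+1) => ∀ a, f a ≠ i))
            = (Finset.univ.image f)ᶜ := by
          ext i
          simp only [Finset.mem_filter, Finset.mem_univ, true_and, Finset.mem_compl,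
            Finset.mem_image, not_exists, not_and]
        rw [hset, Finset.card_compl, Finset.card_image_of_injective _ hinj]
        simp
    _ = (n+1-m) * numOcc S P := by
        rw [Finset.sum_const, smul_eq_mul, numOcc_eq, mul_comm]

lemma patternDensity_nonneg (S : Equiv.Perm (Fin m)) (P : Equiv.Perm (Fin n)) :
    0 ≤ patternDensity S P := by
  unfold patternDensity
  positivity

lemma patternDensity_le_maxDensity (S : Equiv.Perm (Fin m)) (P : Equiv.Perm (Fin n)) :
    patternDensity S P ≤ maxDensity S n :=
  le_ciSup (Set.Finite.bddAbove (Set.finite_range _)) P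

lemma maxDensity_nonneg (S : Equiv.Perm (Fin m)) (n : ℕ) : 0 ≤ maxDensity S n :=
  le_trans (patternDensity_nonneg S (Equiv.refl (Fin n))) (patternDensity_le_maxDensity S _)

lemma maxDensity_succ_le (S : Equiv.Perm (Fin m)) {n : ℕ} (hn : m ≤ n) :
    maxDensity S (n+1) ≤ maxDensity S n := by
  apply ciSup_le
  intro P
  set D := maxDensity S n with hD
  have hC : (0:ℝ) < (n.choose m : ℝ) := by
    exact_mod_cast Nat.choose_pos hn
  have key : ∀ i : Fin (n+1), (numOcc S (del P i) : ℝ) ≤ D * (n.choose m : ℝ) := by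
    intro i
    have h1 : patternDensity S (del P i) ≤ D := patternDensity_le_maxDensity S _
    rwa [patternDensity, div_le_iff₀ hC] at h1
  set d : ℕ := n + 1 - m with hd
  have hd1 : (0:ℝ) < (d:ℝ) := by
    have : 0 < d := by omega
    exact_mod_cast this
  have hsum : (d:ℝ) * ((numOcc S P : ℕ) : ℝ) ≤ ((n:ℝ)+1) * (D * (n.choose m : ℝ)) := by
    have h0 : ((d * numOcc S P : ℕ) : ℝ) = ∑ i : Fin (n+1), ((numOcc S (del P i) : ℕ) : ℝ) := by
      rw [← sum_del S P, Nat.cast_sum]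
    calc (d:ℝ) * ((numOcc S P : ℕ) : ℝ) = ((d * numOcc S P : ℕ) : ℝ) := by push_cast; ring
      _ = ∑ i : Fin (n+1), ((numOcc S (del P i) : ℕ) : ℝ) := h0
      _ ≤ ∑ _i : Fin (n+1), D * (n.choose m : ℝ) := Finset.sum_le_sum (fun i _ => key i)
      _ = ((n:ℝ)+1) * (D * (n.choose m : ℝ)) := by
        rw [Finset.sum_const, Finset.card_univ, Fintype.card_fin, nsmul_eq_mul]
        push_cast; ring
  have hchoose : (n.choose m : ℝ) * ((n:ℝ)+1) = ((n+1).choose m : ℝ) * (d:ℝ) := by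
    exact_mod_cast Nat.choose_mul_succ_eq n m
  rw [patternDensity, div_le_iff₀ (by exact_mod_cast Nat.choose_pos (by omega : m ≤ n+1))]
  have h2 : ((numOcc S P : ℕ) : ℝ) * (d:ℝ) ≤ (D * ((n+1).choose m : ℝ)) * (d:ℝ) := by
    calc ((numOcc S P : ℕ) : ℝ) * (d:ℝ) = (d:ℝ) * ((numOcc S P : ℕ) : ℝ) := by ring
      _ ≤ ((n:ℝ)+1) * (D * (n.choose m : ℝ)) := hsum
      _ = D * ((n.choose m : ℝ) * ((n:ℝ)+1)) := by ring
      _ = D * (((n+1).choose m : ℝ) * (d:ℝ)) := by rw [hchoose]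
      _ = (D * ((n+1).choose m : ℝ)) * (d:ℝ) := by ring
  exact le_of_mul_le_mul_right h2 hd1

/-! ### Part II: construction -/

/-- direct sum of two permutations -/
def dSum {p q : ℕ} (P₁ : Equiv.Perm (Fin p)) (P₂ : Equiv.Perm (Fin q)) :
    Equiv.Perm (Fin (p+q)) :=
  finSumFinEquiv.symm.trans ((Equiv.sumCongr P₁ P₂).trans finSumFinEquiv)

/-- skew sum of two permutations: first block on top -/
def skewSum {p q : ℕ} (P₁ : Equiv.Perm (Fin p)) (P₂ : Equiv.Perm (Fin q)) :
    Equiv.Perm (Fin (p+q)) :=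
  finSumFinEquiv.symm.trans ((Equiv.sumCongr P₁ P₂).trans
    ((Equiv.sumComm (Fin p) (Fin q)).trans (finSumFinEquiv.trans (finCongr (Nat.add_comm q p)))))

@[simp] lemma dSum_castAdd {p q : ℕ} (P₁ : Equiv.Perm (Fin p)) (P₂ : Equiv.Perm (Fin q))
    (x : Fin p) : ((dSum P₁ P₂) (Fin.castAdd q x) : ℕ) = (P₁ x : ℕ) := by
  simp [dSum, finSumFinEquiv_symm_apply_castAdd, finSumFinEquiv_apply_left]

@[simp] lemma dSum_natAdd {p q : ℕ} (P₁ : Equiv.Perm (Fin p)) (P₂ : Equiv.Perm (Fin q))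
    (y : Fin q) : ((dSum P₁ P₂) (Fin.natAdd p y) : ℕ) = p + (P₂ y : ℕ) := by
  simp [dSum, finSumFinEquiv_symm_apply_natAdd, finSumFinEquiv_apply_right]

@[simp] lemma skewSum_castAdd {p q : ℕ} (P₁ : Equiv.Perm (Fin p)) (P₂ : Equiv.Perm (Fin q))
    (x : Fin p) : ((skewSum P₁ P₂) (Fin.castAdd q x) : ℕ) = q + (P₁ x : ℕ) := by
  simp [skewSum, finSumFinEquiv_symm_apply_castAdd, finSumFinEquiv_apply_right, Nat.add_comm]

@[simp] lemma skewSum_natAdd {p q : ℕ} (P₁ : Equiv.Perm (Fin p)) (P₂ : Equiv.Perm (Fin q))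
    (y : Fin q) : ((skewSum P₁ P₂) (Fin.natAdd p y) : ℕ) = (P₂ y : ℕ) := by
  simp [skewSum, finSumFinEquiv_symm_apply_natAdd, finSumFinEquiv_apply_left]

/-- the number of strictly monotone maps `Fin k → Fin M` is `M.choose k` -/
lemma card_strictMono (k M : ℕ) :
    ((Finset.univ : Finset (Fin k → Fin M)).filter
      (fun g => ∀ i j : Fin k, i < j → g i < g j)).card = M.choose k := by
  have h := Finset.card_powersetCard k (Finset.univ : Finset (Fin M))
  rw [Finset.card_univ, Fintype.card_fin] at h
  rw [← h]
  apply Finset.card_bij (fun g _ => Finset.univ.image g)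
  · intro g hg
    rw [Finset.mem_filter] at hg
    have hmono : StrictMono g := fun a b hab => hg.2 a b hab
    rw [Finset.mem_powersetCard]
    refine ⟨Finset.subset_univ _, ?_⟩
    rw [Finset.card_image_of_injective _ hmono.injective, Finset.card_univ, Fintype.card_fin]
  · intro g hg g' hg' him
    rw [Finset.mem_filter] at hg hg'
    have hmono : StrictMono g := fun a b hab => hg.2 a b hab
    have hmono' : StrictMono g' := fun a b hab => hg'.2 a b hab
    have hcard : (Finset.univ.image g).card = k := by
      rw [Finset.card_image_of_injective _ hmono.injective, Finset.card_univ, Fintype.card_fin]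
    have e1 := Finset.orderEmbOfFin_unique hcard (fun x => Finset.mem_image_of_mem g (Finset.mem_univ x)) hmono
    have e2 := Finset.orderEmbOfFin_unique hcard (fun x => him ▸ Finset.mem_image_of_mem g' (Finset.mem_univ x)) hmono'
    rw [e2]
    exact e1
  · intro s hs
    rw [Finset.mem_powersetCard] at hs
    refine ⟨fun i => s.orderEmbOfFin hs.2 i, ?_, ?_⟩
    · rw [Finset.mem_filter]
      exact ⟨Finset.mem_univ _, fun a b hab => (s.orderEmbOfFin hs.2).strictMono hab⟩
    · ext x
      simp only [Finset.mem_image, Finset.mem_univ, true_and]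
      constructor
      · rintro ⟨a, rfl⟩
        exact Finset.orderEmbOfFin_mem s hs.2 a
      · intro hx
        have : x ∈ Set.range (s.orderEmbOfFin hs.2) := by
          rw [Finset.range_orderEmbOfFin]
          exact hx
        obtain ⟨a, ha⟩ := this
        exact ⟨a, ha⟩

def perm231 : Equiv.Perm (Fin 3) :=
  ⟨![1,2,0], ![2,0,1], by intro x; fin_cases x <;> rfl, by intro x; fin_cases x <;> rfl⟩

/-- sum of a list (with definitional control) -/
def sumL : List ℕ → ℕ
  | [] => 0
  | a :: L => a + sumL L

/-- reverse layered permutation with run lengths given by `L` -/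
def revLayered : (L : List ℕ) → Equiv.Perm (Fin (sumL L))
  | [] => Equiv.refl _
  | a :: L => skewSum (Equiv.refl (Fin a)) (revLayered L)

/-- lower bound for the number of 231 occurrences in `revLayered L` -/
def W : List ℕ → ℕ
  | [] => 0
  | a :: L => a.choose 2 * sumL L + W L

lemma step_count (a t : ℕ) (P' : Equiv.Perm (Fin t)) :
    a.choose 2 * t + numOcc perm231 P' ≤
      numOcc perm231 (skewSum (Equiv.refl (Fin a)) P') := by
  classical
  set Q := skewSum (Equiv.refl (Fin a)) P' with hQ
  have hQc : ∀ x : Fin a, (Q (Fin.castAdd t x) : ℕ) = t + (x : ℕ) := by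
    intro x
    rw [hQ, skewSum_castAdd]
    rfl
  have hQn : ∀ z : Fin t, (Q (Fin.natAdd a z) : ℕ) = (P' z : ℕ) := by
    intro z
    rw [hQ, skewSum_natAdd]
  set E := (occSet perm231 P').image (fun f => (Fin.natAdd a : Fin t → Fin (a+t)) ∘ f) with hE
  set Dp := ((Finset.univ : Finset (Fin 2 → Fin a)).filter
      (fun u => ∀ i j : Fin 2, i < j → u i < u j)) ×ˢ (Finset.univ : Finset (Fin t)) with hDp
  set F : ((Fin 2 → Fin a) × Fin t) → (Fin 3 → Fin (a+t)) :=
    fun uz => ![Fin.castAdd t (uz.1 0), Fin.castAdd t (uz.1 1), Fin.natAdd a uz.2] with hF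
  set Cr := Dp.image F with hCr
  have hEsub : E ⊆ occSet perm231 Q := by
    intro f hf
    rw [hE, Finset.mem_image] at hf
    obtain ⟨g, hg, rfl⟩ := hf
    rw [mem_occSet] at hg ⊢
    constructor
    · intro i j hij
      have := hg.1 i j hij
      rw [Fin.lt_def] at this ⊢
      simp only [Function.comp_apply, Fin.coe_natAdd]
      omega
    · intro i j
      rw [hg.2 i j]
      simp only [Function.comp_apply, Fin.lt_def, hQn]
  have hCrsub : Cr ⊆ occSet perm231 Q := by
    intro f hf
    rw [hCr, Finset.mem_image] at hf
    obtain ⟨⟨u, z⟩, huz, rfl⟩ := hf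
    rw [hDp, Finset.mem_product, Finset.mem_filter] at huz
    have hu01 : (u 0 : ℕ) < (u 1 : ℕ) := huz.1.2 0 1 (by decide)
    have hb0 : (u 0 : ℕ) < a := (u 0).is_lt
    have hb1 : (u 1 : ℕ) < a := (u 1).is_lt
    have hbz : (P' z : ℕ) < t := (P' z).is_lt
    rw [mem_occSet]
    constructor
    · intro i j hij
      fin_cases i <;> fin_cases j <;>
        first
        | exact absurd hij (by decide)
        | (simp only [hF, Fin.lt_def]
           simp <;> omega)
    · intro i j
      fin_cases i <;> fin_cases j <;>
        [skip; skip; skip; skip; skip; skip; skip; skip; skip] <;>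
        first
        | (refine iff_of_true (by decide) ?_
           simp only [hF, Fin.lt_def]
           simp [hQc, hQn] <;> omega)
        | (refine iff_of_false (by decide) ?_
           simp only [hF, Fin.lt_def, not_lt]
           simp [hQc, hQn] <;> omega)
  have hdisj : Disjoint E Cr := by
    rw [Finset.disjoint_left]
    intro f hfE hfC
    rw [hE, Finset.mem_image] at hfE
    rw [hCr, Finset.mem_image] at hfC
    obtain ⟨g, _, hg2⟩ := hfE
    obtain ⟨⟨u, z⟩, _, hu2⟩ := hfC
    have h0 : ((Fin.natAdd a : Fin t → Fin (a+t)) ∘ g) 0 = F (u, z) 0 := by rw [hg2, hu2]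
    have hval := congrArg Fin.val h0
    simp only [hF, Function.comp_apply, Fin.coe_natAdd] at hval
    simp at hval
    have := (u 0).is_lt
    omega
  have hEcard : E.card = numOcc perm231 P' := by
    rw [hE, numOcc_eq]
    apply Finset.card_image_of_injOn
    intro g _ g' _ h
    funext x
    have := congrFun h x
    simp only [Function.comp_apply] at this
    have hval := congrArg Fin.val this
    simp only [Fin.coe_natAdd] at hval
    exact Fin.ext (by omega)
  have hCrcard : Cr.card = a.choose 2 * t := by
    rw [hCr]
    rw [Finset.card_image_of_injOn]
    · rw [hDp, Finset.card_product, card_strictMono 2 a, Finset.card_univ, Fintype.card_fin]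
    · intro uz _ uz' _ h
      have h0 := congrArg Fin.val (congrFun h 0)
      have h1 := congrArg Fin.val (congrFun h 1)
      have h2 := congrArg Fin.val (congrFun h 2)
      simp only [hF] at h0 h1 h2
      simp at h0 h1 h2
      have e0 : uz.1 0 = uz'.1 0 := Fin.ext h0
      have e1 : uz.1 1 = uz'.1 1 := Fin.ext h1
      have ez : uz.2 = uz'.2 := Fin.ext (by omega)
      have eu : uz.1 = uz'.1 := by
        funext x
        fin_cases x
        · exact e0
        · exact e1
      exact Prod.ext eu ez
  calc a.choose 2 * t + numOcc perm231 P' = Cr.card + E.card := by rw [hEcard, hCrcard]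
    _ = (Cr ∪ E).card := (Finset.card_union_of_disjoint hdisj.symm).symm
    _ ≤ (occSet perm231 Q).card := Finset.card_le_card (Finset.union_subset hCrsub hEsub)
    _ = numOcc perm231 Q := (numOcc_eq _ _).symm

lemma W_le (L : List ℕ) : W L ≤ numOcc perm231 (revLayered L) := by
  induction L with
  | nil => exact Nat.zero_le _
  | cons a L ih =>
    calc W (a :: L) = a.choose 2 * sumL L + W L := rfl
      _ ≤ a.choose 2 * sumL L + numOcc perm231 (revLayered L) := Nat.add_le_add_left ih _
      _ ≤ numOcc perm231 (skewSum (Equiv.refl (Fin a)) (revLayered L)) :=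
          step_count a (sumL L) (revLayered L)
      _ = numOcc perm231 (revLayered (a :: L)) := rfl

lemma glue_count (A M : ℕ) (Q : Equiv.Perm (Fin A)) :
    numOcc perm231 Q * M.choose 3 ≤
      numOcc perm231654 (dSum Q (Fin.revPerm : Equiv.Perm (Fin M))) := by
  classical
  set R : Equiv.Perm (Fin M) := Fin.revPerm with hR
  set P := dSum Q R with hP
  have hPc : ∀ x : Fin A, (P (Fin.castAdd M x) : ℕ) = (Q x : ℕ) := fun x => by
    rw [hP, dSum_castAdd]
  have hPn : ∀ y : Fin M, (P (Fin.natAdd A y) : ℕ) = A + (M - ((y:ℕ)+1)) := by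
    intro y
    rw [hP, dSum_natAdd, hR]
    simp [Fin.val_rev]
  set T := ((Finset.univ : Finset (Fin 3 → Fin M)).filter
      (fun g => ∀ i j : Fin 3, i < j → g i < g j)) with hT
  set G : (Fin 3 → Fin A) × (Fin 3 → Fin M) → (Fin 6 → Fin (A+M)) :=
    fun fg => ![Fin.castAdd M (fg.1 0), Fin.castAdd M (fg.1 1), Fin.castAdd M (fg.1 2),
      Fin.natAdd A (fg.2 0), Fin.natAdd A (fg.2 1), Fin.natAdd A (fg.2 2)] with hG
  have himg : ((occSet perm231 Q) ×ˢ T).image G ⊆ occSet perm231654 P := by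
    intro f hf
    rw [Finset.mem_image] at hf
    obtain ⟨⟨f1, g⟩, hfg, rfl⟩ := hf
    rw [Finset.mem_product, mem_occSet, hT, Finset.mem_filter] at hfg
    obtain ⟨⟨hmono1, hpat1⟩, _, hmono2⟩ := hfg
    have q01 : (Q (f1 0) : ℕ) < (Q (f1 1) : ℕ) := (hpat1 0 1).mp (by decide)
    have q20 : (Q (f1 2) : ℕ) < (Q (f1 0) : ℕ) := (hpat1 2 0).mp (by decide)
    have b0 : (Q (f1 0) : ℕ) < A := (Q (f1 0)).is_lt
    have b1 : (Q (f1 1) : ℕ) < A := (Q (f1 1)).is_lt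
    have b2 : (Q (f1 2) : ℕ) < A := (Q (f1 2)).is_lt
    have c0 : (g 0 : ℕ) < M := (g 0).is_lt
    have c1 : (g 1 : ℕ) < M := (g 1).is_lt
    have c2 : (g 2 : ℕ) < M := (g 2).is_lt
    have g01 : (g 0 : ℕ) < (g 1 : ℕ) := hmono2 0 1 (by decide)
    have g12 : (g 1 : ℕ) < (g 2 : ℕ) := hmono2 1 2 (by decide)
    have f01 : (f1 0 : ℕ) < (f1 1 : ℕ) := hmono1 0 1 (by decide)
    have f12 : (f1 1 : ℕ) < (f1 2 : ℕ) := hmono1 1 2 (by decide)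
    have d0 : (f1 0 : ℕ) < A := (f1 0).is_lt
    have d1 : (f1 1 : ℕ) < A := (f1 1).is_lt
    have d2 : (f1 2 : ℕ) < A := (f1 2).is_lt
    have e0 : G (f1, g) (⟨0, by omega⟩ : Fin 6) = Fin.castAdd M (f1 0) := rfl
    have e1 : G (f1, g) (⟨1, by omega⟩ : Fin 6) = Fin.castAdd M (f1 1) := rfl
    have e2 : G (f1, g) (⟨2, by omega⟩ : Fin 6) = Fin.castAdd M (f1 2) := rfl
    have e3 : G (f1, g) (⟨3, by omega⟩ : Fin 6) = Fin.natAdd A (g 0) := rfl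
    have e4 : G (f1, g) (⟨4, by omega⟩ : Fin 6) = Fin.natAdd A (g 1) := rfl
    have e5 : G (f1, g) (⟨5, by omega⟩ : Fin 6) = Fin.natAdd A (g 2) := rfl
    rw [mem_occSet]
    constructor
    · intro i j hij
      fin_cases i <;> fin_cases j <;>
        first
        | exact absurd hij (by decide)
        | (simp only [e0, e1, e2, e3, e4, e5, Fin.lt_def, Fin.coe_castAdd, Fin.coe_natAdd]
           omega)
    · intro i j
      fin_cases i <;> fin_cases j <;>
        first
        | (refine iff_of_true (by decide) ?_
           simp only [e0, e1, e2, e3, e4, e5, Fin.lt_def, Fin.coe_castAdd, Fin.coe_natAdd,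
             hPc, hPn]
           omega)
        | (refine iff_of_false (by decide) ?_
           simp only [e0, e1, e2, e3, e4, e5, Fin.lt_def, Fin.coe_castAdd, Fin.coe_natAdd,
             hPc, hPn]
           omega)
  have hinj : Set.InjOn G ↑((occSet perm231 Q) ×ˢ T) := by
    rintro ⟨f1, g⟩ _ ⟨f1', g'⟩ _ h
    have hv : ∀ idx : Fin 6, ((G (f1, g)) idx : ℕ) = ((G (f1', g')) idx : ℕ) :=
      fun idx => congrArg Fin.val (congrFun h idx)
    have e0 : (Fin.castAdd M (f1 0) : ℕ) = (Fin.castAdd M (f1' 0) : ℕ) := hv 0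
    have e1 : (Fin.castAdd M (f1 1) : ℕ) = (Fin.castAdd M (f1' 1) : ℕ) := hv 1
    have e2 : (Fin.castAdd M (f1 2) : ℕ) = (Fin.castAdd M (f1' 2) : ℕ) := hv 2
    have e3 : (Fin.natAdd A (g 0) : ℕ) = (Fin.natAdd A (g' 0) : ℕ) := hv 3
    have e4 : (Fin.natAdd A (g 1) : ℕ) = (Fin.natAdd A (g' 1) : ℕ) := hv 4
    have e5 : (Fin.natAdd A (g 2) : ℕ) = (Fin.natAdd A (g' 2) : ℕ) := hv 5
    simp only [Fin.coe_castAdd, Fin.coe_natAdd] at e0 e1 e2 e3 e4 e5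
    have hff : f1 = f1' := by
      funext x
      fin_cases x
      · exact Fin.ext e0
      · exact Fin.ext e1
      · exact Fin.ext e2
    have hgg : g = g' := by
      funext x
      fin_cases x
      · exact Fin.ext (show ((g 0 : Fin M) : ℕ) = ((g' 0 : Fin M) : ℕ) by omega)
      · exact Fin.ext (show ((g 1 : Fin M) : ℕ) = ((g' 1 : Fin M) : ℕ) by omega)
      · exact Fin.ext (show ((g 2 : Fin M) : ℕ) = ((g' 2 : Fin M) : ℕ) by omega)
    rw [hff, hgg]
  calc numOcc perm231 Q * M.choose 3 = ((occSet perm231 Q) ×ˢ T).card := by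
        rw [Finset.card_product, numOcc_eq, hT, card_strictMono 3 M]
    _ = (((occSet perm231 Q) ×ˢ T).image G).card := (Finset.card_image_of_injOn hinj).symm
    _ ≤ (occSet perm231654 P).card := Finset.card_le_card himg
    _ = numOcc perm231654 P := (numOcc_eq _ _).symm

/-- the master combinatorial lower bound -/
lemma main_count (L : List ℕ) (M : ℕ) :
    W L * M.choose 3 ≤
      numOcc perm231654 (dSum (revLayered L) (Fin.revPerm : Equiv.Perm (Fin M))) :=
  le_trans (Nat.mul_le_mul_right _ (W_le L)) (glue_count _ M (revLayered L))

/-! ### Part III: asymptotics -/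

lemma sumL_map (c : List ℕ) (N : ℕ) : sumL (c.map (· * N)) = sumL c * N := by
  induction c with
  | nil => simp [sumL]
  | cons a l ih =>
    show a * N + sumL (l.map (· * N)) = (a + sumL l) * N
    rw [ih, add_mul]

/-- limit of `(a*N).choose r / N^r` -/
lemma choose_tendsto (a r : ℕ) (ha : 0 < a) :
    Tendsto (fun N : ℕ => (((a * N).choose r : ℕ) : ℝ) / (N : ℝ) ^ r) atTop
      (nhds ((a : ℝ) ^ r / (r.factorial : ℝ))) := by
  have hprod : Tendsto (fun N : ℕ => ∏ i ∈ Finset.range r, ((a : ℝ) - (i : ℝ) / (N : ℝ)))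
      atTop (nhds ((a : ℝ) ^ r)) := by
    have h := tendsto_finset_prod (f := fun (i : ℕ) (N : ℕ) => (a : ℝ) - (i : ℝ) / (N : ℝ))
      (x := atTop) (a := fun _ => (a : ℝ)) (Finset.range r) ?_
    · simpa [Finset.prod_const] using h
    · intro i _
      have h1 : Tendsto (fun N : ℕ => (i : ℝ) / (N : ℝ)) atTop (nhds 0) := by
        have h0 := tendsto_one_div_atTop_nhds_zero_nat (𝕜 := ℝ)
        have h2 := h0.const_mul (i : ℝ)
        simpa [div_eq_mul_inv, mul_comm] using h2
      simpa using tendsto_const_nhds.sub h1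
  have heq : ∀ᶠ N : ℕ in atTop, (∏ i ∈ Finset.range r, ((a : ℝ) - (i : ℝ) / (N : ℝ)))
      / (r.factorial : ℝ) = (((a * N).choose r : ℕ) : ℝ) / (N : ℝ) ^ r := by
    filter_upwards [Filter.eventually_ge_atTop (r + 1)] with N hN
    have hNpos : 0 < N := by omega
    have hN0 : (0 : ℝ) < (N : ℝ) := by exact_mod_cast hNpos
    have hfact : (0 : ℝ) < (r.factorial : ℝ) := by exact_mod_cast r.factorial_pos
    have hch : (((a * N).choose r : ℕ) : ℝ) * (r.factorial : ℝ)
        = ∏ i ∈ Finset.range r, ((a : ℝ) * N - (i : ℝ)) := by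
      have hsub : ∀ i ∈ Finset.range r, ((a * N - i : ℕ) : ℝ) = (a : ℝ) * N - (i : ℝ) := by
        intro i hi
        rw [Finset.mem_range] at hi
        have hle : i ≤ a * N := by nlinarith
        push_cast [hle]
        ring
      have hdesc : (((a * N).descFactorial r : ℕ) : ℝ)
          = ∏ i ∈ Finset.range r, ((a : ℝ) * N - (i : ℝ)) := by
        rw [Nat.descFactorial_eq_prod_range, Nat.cast_prod]
        exact Finset.prod_congr rfl hsub
      rw [← hdesc, Nat.descFactorial_eq_factorial_mul_choose]
      push_cast
      ring
    calc (∏ i ∈ Finset.range r, ((a : ℝ) - (i : ℝ) / (N : ℝ))) / (r.factorial : ℝ)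
        = (∏ i ∈ Finset.range r, (((a : ℝ) * N - (i : ℝ)) / (N : ℝ))) / (r.factorial : ℝ) := by
          congr 1
          refine Finset.prod_congr rfl (fun i _ => ?_)
          field_simp
      _ = ((∏ i ∈ Finset.range r, ((a : ℝ) * N - (i : ℝ))) / (N : ℝ) ^ r)
            / (r.factorial : ℝ) := by
          rw [Finset.prod_div_distrib, Finset.prod_const, Finset.card_range]
      _ = (((a * N).choose r : ℕ) : ℝ) / (N : ℝ) ^ r := by
          rw [← hch]
          field_simp
  exact (hprod.div_const _).congr' heq

/-- real-valued asymptotic weight -/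
noncomputable def WR : List ℕ → ℝ
  | [] => 0
  | a :: l => (a : ℝ) ^ 2 / 2 * (sumL l : ℝ) + WR l

lemma W_tendsto (c : List ℕ) :
    Tendsto (fun N : ℕ => ((W (c.map (· * N)) : ℕ) : ℝ) / (N : ℝ) ^ 3) atTop (nhds (WR c)) := by
  induction c with
  | nil =>
    have : (fun N : ℕ => ((W ((List.nil).map (· * N)) : ℕ) : ℝ) / (N : ℝ) ^ 3)
        = fun _ => (0 : ℝ) := by
      funext N
      show ((W [] : ℕ) : ℝ) / _ = 0
      show ((0 : ℕ) : ℝ) / _ = 0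
      simp
    rw [this]
    show Tendsto _ atTop (nhds (WR []))
    show Tendsto _ atTop (nhds 0)
    exact tendsto_const_nhds
  | cons a l ih =>
    have hterm : Tendsto (fun N : ℕ => (((a * N).choose 2 : ℕ) : ℝ) / (N : ℝ) ^ 2
        * ((sumL l : ℝ) * 1)) atTop
        (nhds ((a : ℝ) ^ 2 / 2 * ((sumL l : ℝ) * 1))) := by
      rcases Nat.eq_zero_or_pos a with rfl | ha
      · have : (fun N : ℕ => (((0 * N).choose 2 : ℕ) : ℝ) / (N : ℝ) ^ 2 * ((sumL l : ℝ) * 1))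
            = fun _ => 0 := by
          funext N
          simp [Nat.choose]
        rw [this]
        have h0 : ((0 : ℕ) : ℝ) ^ 2 / 2 * ((sumL l : ℝ) * 1) = 0 := by simp
        rw [h0]
        exact tendsto_const_nhds
      · have h := (choose_tendsto a 2 ha).mul_const ((sumL l : ℝ) * 1)
        have h2 : ((a : ℝ) ^ 2 / (Nat.factorial 2 : ℝ)) * ((sumL l : ℝ) * 1)
            = (a : ℝ) ^ 2 / 2 * ((sumL l : ℝ) * 1) := by
          norm_num [Nat.factorial]
        rw [h2] at h
        exact h
    have hsum := hterm.add ih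
    have heq : ∀ᶠ N : ℕ in atTop,
        (((a * N).choose 2 : ℕ) : ℝ) / (N : ℝ) ^ 2 * ((sumL l : ℝ) * 1)
          + ((W (l.map (· * N)) : ℕ) : ℝ) / (N : ℝ) ^ 3
        = ((W ((a :: l).map (· * N)) : ℕ) : ℝ) / (N : ℝ) ^ 3 := by
      filter_upwards [Filter.eventually_ge_atTop 1] with N hN
      have hN0 : (0 : ℝ) < (N : ℝ) := by exact_mod_cast hN
      have hWc : (W ((a :: l).map (· * N)) : ℕ)
          = (a * N).choose 2 * sumL (l.map (· * N)) + W (l.map (· * N)) := rfl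
      rw [hWc, sumL_map]
      push_cast
      field_simp
    have := hsum.congr' heq
    show Tendsto _ atTop (nhds (WR (a :: l)))
    have hWR : WR (a :: l) = (a : ℝ) ^ 2 / 2 * ((sumL l : ℝ) * 1) + WR l := by
      show WR (a :: l) = _
      rw [show WR (a :: l) = (a : ℝ) ^ 2 / 2 * (sumL l : ℝ) + WR l from rfl]
      ring
    rw [hWR]
    exact this

lemma density_tendsto (c : List ℕ) (hc : 0 < sumL c) :
    Tendsto (fun N : ℕ => ((W (c.map (· * N)) : ℕ) : ℝ)
        * (((sumL c * N).choose 3 : ℕ) : ℝ) / (((2 * sumL c * N).choose 6 : ℕ) : ℝ))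
      atTop
      (nhds (WR c * ((sumL c : ℝ) ^ 3 / 6) / ((2 * (sumL c : ℝ)) ^ 6 / 720))) := by
  set C := sumL c with hC
  have h1 := W_tendsto c
  have h2 := choose_tendsto C 3 hc
  have h3 := choose_tendsto (2 * C) 6 (by omega)
  have hden : ((2 * C : ℕ) : ℝ) ^ 6 / (Nat.factorial 6 : ℝ) ≠ 0 := by
    have : (0:ℝ) < ((2 * C : ℕ) : ℝ) := by exact_mod_cast (by omega : 0 < 2 * C)
    positivity
  have hcomb := ((h1.mul h2).div h3 hden)
  have heq : ∀ᶠ N : ℕ in atTop,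
      (((W (c.map (· * N)) : ℕ) : ℝ) / (N : ℝ) ^ 3
          * ((((C * N).choose 3 : ℕ) : ℝ) / (N : ℝ) ^ 3))
        / ((((2 * C * N).choose 6 : ℕ) : ℝ) / (N : ℝ) ^ 6)
      = ((W (c.map (· * N)) : ℕ) : ℝ)
          * (((C * N).choose 3 : ℕ) : ℝ) / (((2 * C * N).choose 6 : ℕ) : ℝ) := by
    filter_upwards [Filter.eventually_ge_atTop 3] with N hN
    have hN0 : (0 : ℝ) < (N : ℝ) := by exact_mod_cast (by omega : 0 < N)
    have hch : (0:ℝ) < (((2 * C * N).choose 6 : ℕ) : ℝ) := by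
      have : 6 ≤ 2 * C * N := by nlinarith
      exact_mod_cast Nat.choose_pos this
    field_simp
  have := hcomb.congr' heq
  have hlim : ((C : ℝ) ^ 3 / (Nat.factorial 3 : ℝ)) = ((C : ℝ) ^ 3 / 6) := by
    norm_num [Nat.factorial]
  have hlim6 : (((2 * C : ℕ) : ℝ) ^ 6 / (Nat.factorial 6 : ℝ)) = ((2 * (C:ℝ)) ^ 6 / 720) := by
    norm_num [Nat.factorial]
  rw [hlim, hlim6] at this
  exact this

lemma density_lb (c : List ℕ) (N : ℕ) :
    ((W (c.map (· * N)) : ℕ) : ℝ) * (((sumL c * N).choose 3 : ℕ) : ℝ)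
        / (((2 * sumL c * N).choose 6 : ℕ) : ℝ)
      ≤ maxDensity perm231654 (2 * sumL c * N) := by
  have hA : sumL (c.map (· * N)) = sumL c * N := sumL_map c N
  set P := dSum (revLayered (c.map (· * N))) (Fin.revPerm : Equiv.Perm (Fin (sumL c * N)))
    with hP
  have hmc := main_count (c.map (· * N)) (sumL c * N)
  have hn' : sumL (c.map (· * N)) + sumL c * N = 2 * sumL c * N := by rw [hA]; ring
  have h1 : ((W (c.map (· * N)) : ℕ) : ℝ) * (((sumL c * N).choose 3 : ℕ) : ℝ)
      / (((2 * sumL c * N).choose 6 : ℕ) : ℝ) ≤ patternDensity perm231654 P := by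
    unfold patternDensity
    rw [show (sumL (c.map (· * N)) + sumL c * N).choose 6 = (2 * sumL c * N).choose 6 by
      rw [hn']]
    rw [div_eq_mul_inv, div_eq_mul_inv]
    apply mul_le_mul_of_nonneg_right _ (by positivity)
    have : ((W (c.map (· * N)) * (sumL c * N).choose 3 : ℕ) : ℝ) ≤ (numOcc perm231654 P : ℝ) := by
      exact_mod_cast hmc
    push_cast at this
    linarith
  calc _ ≤ patternDensity perm231654 P := h1
    _ ≤ maxDensity perm231654 (sumL (c.map (· * N)) + sumL c * N) :=
        patternDensity_le_maxDensity _ _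
    _ = maxDensity perm231654 (2 * sumL c * N) := by rw [hn']

/-- truncated geometric run-length profile -/
def cGeo (b q : ℕ) : ℕ → List ℕ
  | 0 => [1]
  | k+1 => (q - b) * q ^ k :: (cGeo b q k).map (· * b)

lemma sumL_cGeo (b q : ℕ) (hbq : b ≤ q) : ∀ k, sumL (cGeo b q k) = q ^ k
  | 0 => by simp [cGeo, sumL]
  | k+1 => by
    show (q - b) * q ^ k + sumL ((cGeo b q k).map (· * b)) = q ^ (k+1)
    rw [sumL_map, sumL_cGeo b q hbq k, pow_succ]
    have h : q - b + b = q := Nat.sub_add_cancel hbq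
    calc (q - b) * q ^ k + q ^ k * b = q ^ k * ((q - b) + b) := by ring
      _ = q ^ k * q := by rw [h]

lemma WR_map_mul (b : ℕ) : ∀ l : List ℕ, WR (l.map (· * b)) = (b : ℝ) ^ 3 * WR l
  | [] => by
    show WR [] = (b:ℝ)^3 * WR []
    show (0:ℝ) = (b:ℝ)^3 * 0
    ring
  | a :: l => by
    show ((a * b : ℕ) : ℝ) ^ 2 / 2 * (sumL (l.map (· * b)) : ℝ) + WR (l.map (· * b))
      = (b : ℝ) ^ 3 * ((a : ℝ) ^ 2 / 2 * (sumL l : ℝ) + WR l)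
    rw [sumL_map, WR_map_mul b l]
    push_cast
    ring

lemma WR_cGeo (b q : ℕ) (hbq : b ≤ q) : ∀ k,
    2 * WR (cGeo b q k) * ((q : ℝ) ^ 3 - (b : ℝ) ^ 3)
      = ((q : ℝ) - (b : ℝ)) ^ 2 * (b : ℝ) * (((q : ℝ) ^ k) ^ 3 - ((b : ℝ) ^ k) ^ 3)
  | 0 => by
    show 2 * WR [1] * _ = _
    show 2 * (((1:ℕ) : ℝ) ^ 2 / 2 * (sumL ([] : List ℕ) : ℝ) + WR []) * _ = _
    show 2 * (((1:ℕ) : ℝ) ^ 2 / 2 * ((0:ℕ) : ℝ) + 0) * _ = _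
    push_cast
    ring
  | k+1 => by
    have ih := WR_cGeo b q hbq k
    show 2 * WR ((q - b) * q ^ k :: (cGeo b q k).map (· * b)) * _ = _
    rw [show WR ((q - b) * q ^ k :: (cGeo b q k).map (· * b))
        = (((q - b) * q ^ k : ℕ) : ℝ) ^ 2 / 2 * (sumL ((cGeo b q k).map (· * b)) : ℝ)
          + WR ((cGeo b q k).map (· * b)) from rfl]
    rw [sumL_map, sumL_cGeo b q hbq k, WR_map_mul]
    have hc : ((q - b : ℕ) : ℝ) = (q : ℝ) - (b : ℝ) := by
      exact_mod_cast Nat.cast_sub (R := ℝ) hbq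
    push_cast [hc]
    rw [pow_succ, pow_succ]
    linear_combination ((b:ℝ)^3) * ih

/-- the objective function -/
noncomputable def Ffun (x : ℝ) : ℝ := 15/16 * (x * (1 - x) / (1 + x + x^2))

lemma Vval (b q k : ℕ) (hb : 0 < b) (hbq : b < q) :
    WR (cGeo b q k) * ((sumL (cGeo b q k) : ℝ) ^ 3 / 6)
        / ((2 * (sumL (cGeo b q k) : ℝ)) ^ 6 / 720)
      = Ffun ((b : ℝ) / (q : ℝ)) * (1 - ((b : ℝ) / (q : ℝ)) ^ (3 * k)) := by
  have hqR : (0:ℝ) < (q:ℝ) := by exact_mod_cast (by omega : 0 < q)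
  have hbR : (0:ℝ) < (b:ℝ) := by exact_mod_cast hb
  have hlt : (b:ℝ) < (q:ℝ) := by exact_mod_cast hbq
  have hqk : (0:ℝ) < (q:ℝ) ^ k := by positivity
  have hq3 : (0:ℝ) < (q:ℝ) ^ 3 - (b:ℝ) ^ 3 := by
    have := pow_lt_pow_left₀ hlt hbR.le (n := 3) (by norm_num)
    linarith
  have hWR := WR_cGeo b q hbq.le k
  have hWReq : WR (cGeo b q k)
      = ((q : ℝ) - (b : ℝ)) ^ 2 * (b : ℝ) * (((q : ℝ) ^ k) ^ 3 - ((b : ℝ) ^ k) ^ 3)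
        / (2 * ((q : ℝ) ^ 3 - (b : ℝ) ^ 3)) := by
    rw [eq_div_iff (by positivity)]
    linarith [hWR]
  rw [hWReq, sumL_cGeo b q hbq.le k, Ffun]
  have hpow : ((b : ℝ) / (q : ℝ)) ^ (3 * k) = ((b : ℝ) ^ k) ^ 3 / ((q : ℝ) ^ k) ^ 3 := by
    rw [div_pow, pow_mul', pow_mul']
  rw [hpow]
  have hden1 : (1 + (b:ℝ)/(q:ℝ) + ((b:ℝ)/(q:ℝ))^2) ≠ 0 := by positivity
  push_cast
  field_simp
  ring

lemma sqrt3_sq : Real.sqrt 3 ^ 2 = 3 := Real.sq_sqrt (by norm_num)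

lemma sqrt3_gt_one : 1 < Real.sqrt 3 := by
  have h := Real.sqrt_lt_sqrt (by norm_num : (0:ℝ) ≤ 1) (by norm_num : (1:ℝ) < 3)
  rwa [Real.sqrt_one] at h

lemma sqrt3_lt_three : Real.sqrt 3 < 3 := by
  have h := Real.sqrt_lt_sqrt (by norm_num : (0:ℝ) ≤ 3) (by norm_num : (3:ℝ) < 9)
  have h9 : Real.sqrt 9 = 3 := by
    rw [show (9:ℝ) = 3 ^ 2 by norm_num, Real.sqrt_sq (by norm_num)]
  linarith

lemma Ffun_val : Ffun ((Real.sqrt 3 - 1) / 2) = 5/16 * (2 * Real.sqrt 3 - 3) := by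
  have h3 := sqrt3_sq
  rw [Ffun]
  have hden : 1 + (Real.sqrt 3 - 1)/2 + ((Real.sqrt 3 - 1)/2)^2 = 3/2 := by
    linear_combination h3 / 4
  rw [hden]
  linear_combination (-(5:ℝ)/32) * h3

lemma Ffun_contAt : ContinuousAt Ffun ((Real.sqrt 3 - 1) / 2) := by
  have h3 := sqrt3_sq
  have hden : 1 + (Real.sqrt 3 - 1)/2 + ((Real.sqrt 3 - 1)/2)^2 = 3/2 := by
    linear_combination h3 / 4
  have h1 : ContinuousAt (fun x : ℝ => x * (1 - x)) ((Real.sqrt 3 - 1) / 2) :=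
    (continuous_id.mul (continuous_const.sub continuous_id)).continuousAt
  have h2 : ContinuousAt (fun x : ℝ => 1 + x + x^2) ((Real.sqrt 3 - 1) / 2) :=
    ((continuous_const.add continuous_id).add (continuous_pow 2)).continuousAt
  have hne : (fun x : ℝ => 1 + x + x^2) ((Real.sqrt 3 - 1) / 2) ≠ 0 := by
    show 1 + (Real.sqrt 3 - 1)/2 + ((Real.sqrt 3 - 1)/2)^2 ≠ 0
    rw [hden]; norm_num
  have hdiv := h1.div h2 hne
  have hconst : ContinuousAt (fun _ : ℝ => (15/16 : ℝ)) ((Real.sqrt 3 - 1)/2) :=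
    continuousAt_const
  have hmul := hconst.mul hdiv
  unfold Ffun
  exact hmul

lemma Ffun_le_one {x : ℝ} (h0 : 0 ≤ x) (h1 : x ≤ 1) : Ffun x ≤ 1 := by
  rw [Ffun]
  have hd : (0:ℝ) < 1 + x + x^2 := by positivity
  have h2 : x * (1 - x) / (1 + x + x^2) ≤ 1 := by
    rw [div_le_one hd]
    nlinarith
  have h2' : 0 ≤ x * (1 - x) := by nlinarith
  have h3 : 0 ≤ x * (1 - x) / (1 + x + x^2) := by positivity
  nlinarith

lemma exists_good (ε : ℝ) (hε : 0 < ε) (j : ℕ) :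
    ∃ n, j ≤ n ∧ 5/16 * (2 * Real.sqrt 3 - 3) - ε ≤ maxDensity perm231654 n := by
  set c₀ : ℝ := 5/16 * (2 * Real.sqrt 3 - 3) with hc₀
  set β₀ : ℝ := (Real.sqrt 3 - 1) / 2 with hβ₀
  have hβpos : 0 < β₀ := by
    have := sqrt3_gt_one
    rw [hβ₀]; linarith
  have hβlt1 : β₀ < 1 := by
    have := sqrt3_lt_three
    rw [hβ₀]; linarith
  obtain ⟨δ, hδ0, hδ⟩ := Metric.continuousAt_iff.mp Ffun_contAt (ε/2) (by positivity)
  obtain ⟨r, hr1, hr2⟩ := exists_rat_btwn (show max 0 (β₀ - δ) < β₀ by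
    rw [max_lt_iff]; exact ⟨hβpos, by linarith⟩)
  have hr0 : (0:ℝ) < (r:ℝ) := lt_of_le_of_lt (le_max_left _ _) hr1
  have hrlt1 : (r:ℝ) < 1 := lt_trans hr2 hβlt1
  have hFr : c₀ - ε/2 < Ffun (r:ℝ) := by
    have hdist : dist (r:ℝ) β₀ < δ := by
      rw [Real.dist_eq, abs_lt]
      constructor
      · have := lt_of_le_of_lt (le_max_right 0 (β₀ - δ)) hr1
        linarith
      · linarith
    have h := hδ hdist
    rw [Real.dist_eq, abs_lt] at h
    have hval : Ffun β₀ = c₀ := by rw [hβ₀, hc₀]; exact Ffun_val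
    rw [hval] at h
    linarith [h.1]
  -- extract numerator and denominator
  set q : ℕ := r.den with hqdef
  set b : ℕ := r.num.toNat with hbdef
  have hq0 : 0 < q := r.pos
  have hnum : (0:ℤ) < r.num := Rat.num_pos.mpr (by exact_mod_cast hr0)
  have hbq : ((b:ℕ) : ℝ) / ((q:ℕ) : ℝ) = (r:ℝ) := by
    rw [Rat.cast_def]
    congr 1
    rw [hbdef]
    exact_mod_cast congrArg (Int.cast : ℤ → ℝ) (Int.toNat_of_nonneg hnum.le)
  have hb0 : 0 < b := by
    rw [hbdef]
    omega
  have hblt : b < q := by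
    have hqR : (0:ℝ) < ((q:ℕ):ℝ) := by exact_mod_cast hq0
    have hbrq : ((b:ℕ):ℝ) = (r:ℝ) * ((q:ℕ):ℝ) := by
      rw [← hbq]
      field_simp
    have h1 : ((b:ℕ):ℝ) < ((q:ℕ):ℝ) := by
      rw [hbrq]
      nlinarith [hrlt1, hqR]
    exact_mod_cast h1
  -- choose k
  obtain ⟨k0, hk0⟩ := exists_pow_lt_of_lt_one (show (0:ℝ) < ε/4 by positivity)
    (show (r:ℝ) < 1 from hrlt1)
  set k := k0 with hk
  have hpowsm : ((r:ℝ)) ^ (3 * k) < ε/4 := by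
    calc ((r:ℝ)) ^ (3*k) ≤ ((r:ℝ)) ^ k0 := by
          apply pow_le_pow_of_le_one hr0.le hrlt1.le
          omega
      _ < ε/4 := hk0
  set c : List ℕ := cGeo b q k with hcdef
  have hC : 0 < sumL c := by
    rw [hcdef, sumL_cGeo b q hblt.le k]
    positivity
  have htd := density_tendsto c hC
  have hVv : WR c * ((sumL c : ℝ) ^ 3 / 6) / ((2 * (sumL c : ℝ)) ^ 6 / 720)
      = Ffun ((r:ℝ)) * (1 - ((r:ℝ)) ^ (3 * k)) := by
    rw [hcdef]
    rw [Vval b q k hb0 hblt, hbq]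
  rw [hVv] at htd
  have hlimgt : c₀ - ε < Ffun ((r:ℝ)) * (1 - ((r:ℝ)) ^ (3 * k)) := by
    have hpownn : (0:ℝ) ≤ ((r:ℝ)) ^ (3*k) := by positivity
    have hFle : Ffun (r:ℝ) ≤ 1 := Ffun_le_one hr0.le hrlt1.le
    nlinarith
  have hev := (htd.eventually_const_lt hlimgt).and (Filter.eventually_ge_atTop j)
  obtain ⟨N, hN1, hN2⟩ := hev.exists
  refine ⟨2 * sumL c * N, ?_, ?_⟩
  · calc j ≤ N := hN2
      _ ≤ 2 * sumL c * N := Nat.le_mul_of_pos_left N (by omega)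
  · calc c₀ - ε ≤ ((W (c.map (· * N)) : ℕ) : ℝ) * (((sumL c * N).choose 3 : ℕ) : ℝ)
          / (((2 * sumL c * N).choose 6 : ℕ) : ℝ) := le_of_lt hN1
      _ ≤ maxDensity perm231654 (2 * sumL c * N) := density_lb c N

end Pack

/-- p(231654) ≥ 6!·(1/2)⁶/(3!)²·(2√3 − 3) = (5/16)·(2√3 − 3). -/
theorem stmt_17 :
    ∃ L : ℝ, Tendsto (fun n => maxDensity perm231654 n) atTop (nhds L) ∧
      (5 / 16 : ℝ) * (2 * Real.sqrt 3 - 3) ≤ L := by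
  have hanti : Antitone (fun n : ℕ => maxDensity perm231654 (n + 6)) := by
    apply antitone_nat_of_succ_le
    intro n
    exact Pack.maxDensity_succ_le perm231654 (n := n + 6) (by omega)
  have hbdd : BddBelow (Set.range (fun n : ℕ => maxDensity perm231654 (n + 6))) := by
    refine ⟨0, ?_⟩
    rintro x ⟨n, rfl⟩
    exact Pack.maxDensity_nonneg _ _
  have htends := tendsto_atTop_ciInf hanti hbdd
  set L := ⨅ n : ℕ, maxDensity perm231654 (n + 6) with hL
  have htends' : Tendsto (fun n => maxDensity perm231654 n) atTop (nhds L) :=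
    (tendsto_add_atTop_iff_nat 6).mp htends
  refine ⟨L, htends', ?_⟩
  by_contra hcon
  push_neg at hcon
  set c₀ : ℝ := (5 / 16 : ℝ) * (2 * Real.sqrt 3 - 3) with hc₀
  have hev := htends'.eventually_lt_const (show L < (L + c₀)/2 by linarith)
  rw [Filter.eventually_atTop] at hev
  obtain ⟨j, hj⟩ := hev
  obtain ⟨n, hn1, hn2⟩ := Pack.exists_good ((c₀ - L)/2) (by linarith) j
  have h1 := hj n hn1
  have h2 : c₀ - (c₀ - L)/2 = (L + c₀)/2 := by ring
  rw [hc₀] at hn2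
  have : (5 / 16 : ℝ) * (2 * Real.sqrt 3 - 3) - (c₀ - L) / 2 ≤ maxDensity perm231654 n := hn2
  rw [← hc₀] at this
  linarith
end
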